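/- arXiv:2311.14934 — 4 statements merged into one kernel-verified Lean document; each statement's English description precedes it below -/
import Mathlib

section
/- Define ψ_γ : [0,∞) → ℝ by ψ_γ(v) = ρ_γ(√v), where ρ_γ is the MCP with parameter γ > 0. Then ψ_γ is concave on [0,∞). -/
/-!
On `[0, γ²]` we have `ψ_γ(v) = √v - v / (2γ)`, which is concave and increases up to its maximum
`γ / 2` at `v = γ²`, and beyond `γ²` the function `ψ_γ` stays at that maximum. Hence
`ψ_γ(v) = g (min v γ²)` with `g(v) = √v - v / (2γ)`: a concave function that is monotone on the
relevant range, composed with the concave map `v ↦ min v γ²`.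
-/

/-- The Minimax Concave Penalty with threshold `γ`. -/
noncomputable def mcp (γ y : ℝ) : ℝ := if y < γ then y - y^2 / (2*γ) else γ/2

open Set

theorem ConcaveOn.comp_min_const {g : ℝ → ℝ} {a c : ℝ} (hac : a ≤ c)
    (hg : ConcaveOn ℝ (Icc a c) g) (hg_mono : MonotoneOn g (Icc a c)) :
    ConcaveOn ℝ (Ici a) fun v => g (min v c) := by
  have h_image : (fun v => min v c) '' Ici a = Icc a c := by
    ext w
    constructor
    · rintro ⟨v, hv, rfl⟩
      exact ⟨le_min hv hac, min_le_right v c⟩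
    · rintro ⟨haw, hwc⟩
      exact ⟨w, haw, min_eq_left hwc⟩
  have h_min : ConcaveOn ℝ (Ici a) fun v => min v c :=
    (concaveOn_id (convex_Ici a)).inf (concaveOn_const c (convex_Ici a))
  exact ConcaveOn.comp (h_image ▸ hg) h_min (h_image ▸ hg_mono)

theorem concaveOn_sqrt_sub_div (γ : ℝ) :
    ConcaveOn ℝ (Ici 0) fun v => √v - v / (2 * γ) := by
  have h_lin : ConvexOn ℝ (Ici 0) fun v : ℝ => v / (2 * γ) :=
    (LinearMap.mulRight ℝ (2 * γ)⁻¹).convexOn (convex_Ici 0)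
  exact Real.strictConcaveOn_sqrt.concaveOn.sub h_lin

theorem monotoneOn_sqrt_sub_div {γ : ℝ} (hγ : 0 < γ) :
    MonotoneOn (fun v => √v - v / (2 * γ)) (Icc 0 (γ ^ 2)) := by
  rintro u ⟨hu, -⟩ v ⟨hv, hvγ⟩ huv
  have hxy : √u ≤ √v := Real.sqrt_le_sqrt huv
  have hyγ : √v ≤ γ := Real.sqrt_le_iff.mpr ⟨hγ.le, hvγ⟩
  -- `v - u = (√v - √u) (√u + √v)` and `√u + √v ≤ 2γ`
  have h_incr : v / (2 * γ) - u / (2 * γ) ≤ √v - √u := by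
    rw [← sub_div, div_le_iff₀ (by positivity)]
    nlinarith [Real.sq_sqrt hu, Real.sq_sqrt hv, Real.sqrt_nonneg u,
      mul_nonneg (sub_nonneg.mpr hxy) (by linarith : 0 ≤ 2 * γ - (√u + √v))]
  dsimp only
  linarith

theorem mcp_sqrt_eq {γ v : ℝ} (hγ : 0 < γ) (hv : 0 ≤ v) :
    mcp γ √v = √(min v (γ ^ 2)) - min v (γ ^ 2) / (2 * γ) := by
  rcases lt_or_ge v (γ ^ 2) with h | h
  · have : √v < γ := (Real.sqrt_lt' hγ).mpr h
    rw [mcp, if_pos this, min_eq_left h.le, Real.sq_sqrt hv]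
  · have : ¬ √v < γ := not_lt.mpr (Real.le_sqrt_of_sq_le h)
    rw [mcp, if_neg this, min_eq_right h, Real.sqrt_sq hγ.le]
    field_simp
    ring

/-- The map `ψ_γ(v) = ρ_γ(√v)` is concave on `[0,∞)` for `γ > 0`. -/
theorem mcp_sqrt_concave (γ : ℝ) (hγ : 0 < γ) :
    ConcaveOn ℝ (Set.Ici 0) (fun v => mcp γ (Real.sqrt v)) := by
  have hg : ConcaveOn ℝ (Icc 0 (γ ^ 2)) fun v => √v - v / (2 * γ) :=
    (concaveOn_sqrt_sub_div γ).subset Icc_subset_Ici_self (convex_Icc _ _)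
  exact (hg.comp_min_const (sq_nonneg γ) (monotoneOn_sqrt_sub_div hγ)).congr
    fun v hv => (mcp_sqrt_eq hγ hv).symm
end

section
/- With the notation above, the matrix diag(q) + W ⊙ Ã is positive semidefinite, where q_m = Σ_j W_{mj} A_{mj} / d_m. Consequently, for any λ ≥ 0, diag(q) + W ⊙ Ã + λI is positive semidefinite. -/
/-!
With `D = diag(d)^(-1/2)` and `B = W ⊙ A`, one has `W ⊙ Ã = D B D` and
`diag(q) = D diag(B 1) D`. So `diag(q) + W ⊙ Ã = D (diag(B 1) + B) D` is congruent to the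
signless Laplacian of the nonnegative symmetric weight matrix `B`, whose quadratic form is
`½ ∑ᵢⱼ Bᵢⱼ (xᵢ + xⱼ)² ≥ 0`.
-/

open Matrix

namespace Matrix

theorem IsSymm.hadamard {ι α : Type*} [Mul α] {A B : Matrix ι ι α} (hA : A.IsSymm)
    (hB : B.IsSymm) : (A ⊙ B).IsSymm :=
  IsSymm.ext fun i j => by simp only [hadamard_apply, hA.apply, hB.apply]

variable {ι : Type*} [Fintype ι] [DecidableEq ι]

def signlessLaplacian (B : Matrix ι ι ℝ) : Matrix ι ι ℝ :=
  diagonal (fun i => ∑ j, B i j) + B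

theorem dotProduct_signlessLaplacian_mulVec {B : Matrix ι ι ℝ} (hB : B.IsSymm)
    (x : ι → ℝ) :
    x ⬝ᵥ (signlessLaplacian B *ᵥ x) = (∑ i, ∑ j, B i j * (x i + x j) ^ 2) / 2 := by
  have hquad : x ⬝ᵥ (signlessLaplacian B *ᵥ x) =
      ∑ i, ∑ j, B i j * x i ^ 2 + ∑ i, ∑ j, x i * (B i j * x j) := by
    rw [signlessLaplacian, add_mulVec, dotProduct_add]
    simp only [dotProduct, mulVec_diagonal]
    simp only [mulVec, dotProduct, Finset.mul_sum, Finset.sum_mul]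
    congr 1
    exact Fintype.sum_congr _ _ fun i => Fintype.sum_congr _ _ fun j => by ring
  have hswap : ∑ i, ∑ j, B i j * x j ^ 2 = ∑ i, ∑ j, B i j * x i ^ 2 := by
    rw [Finset.sum_comm]
    simp_rw [hB.apply]
  have hexpand : ∑ i, ∑ j, B i j * (x i + x j) ^ 2 =
      ∑ i, ∑ j, B i j * x i ^ 2 + ∑ i, ∑ j, B i j * x j ^ 2
        + 2 * ∑ i, ∑ j, x i * (B i j * x j) := by
    simp only [Finset.mul_sum, ← Finset.sum_add_distrib]
    exact Fintype.sum_congr _ _ fun i => Fintype.sum_congr _ _ fun j => by ring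
  rw [hquad, hexpand, hswap]
  ring

theorem posSemidef_signlessLaplacian {B : Matrix ι ι ℝ} (hB : B.IsSymm)
    (hB_nonneg : ∀ i j, 0 ≤ B i j) : (signlessLaplacian B).PosSemidef := by
  have hsymm : (signlessLaplacian B).IsHermitian :=
    isHermitian_iff_isSymm.mpr ((isSymm_diagonal _).add hB)
  refine posSemidef_iff_dotProduct_mulVec.mpr ⟨hsymm, fun x => ?_⟩
  rw [star_trivial, dotProduct_signlessLaplacian_mulVec hB]
  exact div_nonneg (Finset.sum_nonneg fun i _ => Finset.sum_nonneg fun j _ =>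
    mul_nonneg (hB_nonneg i j) (sq_nonneg _)) zero_le_two

theorem diagonal_add_hadamard_eq_conj_signlessLaplacian {A W Atil : Matrix ι ι ℝ}
    {deg q : ι → ℝ} (hdeg_pos : ∀ i, 0 < deg i)
    (hAtil : ∀ i j, Atil i j = A i j / Real.sqrt (deg i * deg j))
    (hq : ∀ m, q m = ∑ j, W m j * A m j / deg m) :
    diagonal q + W ⊙ Atil = (diagonal fun i => (Real.sqrt (deg i))⁻¹)ᴴ *
      signlessLaplacian (W ⊙ A) * diagonal fun i => (Real.sqrt (deg i))⁻¹ := by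
  ext i j
  rw [diagonal_conjTranspose, mul_diagonal, diagonal_mul]
  simp only [signlessLaplacian, add_apply, hadamard_apply, hAtil,
    Real.sqrt_mul (hdeg_pos i).le, star_trivial]
  by_cases hij : i = j
  · subst hij
    have hsq : Real.sqrt (deg i) ^ 2 = deg i := Real.sq_sqrt (hdeg_pos i).le
    simp only [diagonal_apply_eq, hq, ← Finset.sum_div]
    field_simp
    rw [hsq, add_div]
  · simp only [diagonal_apply_ne _ hij, zero_add]
    field_simp

end Matrix

theorem diag_add_hadamard_posSemidef_general (n : ℕ)
    (A W : Matrix (Fin n) (Fin n) ℝ)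
    (hA01 : ∀ i j, A i j = 0 ∨ A i j = 1) (hAsymm : A.IsSymm)
    (deg : Fin n → ℝ) (hdegpos : ∀ i, 0 < deg i)
    (hWsymm : W.IsSymm) (hWnn : ∀ i j, 0 ≤ W i j)
    (Atil : Matrix (Fin n) (Fin n) ℝ)
    (hAtil : ∀ i j, Atil i j = A i j / Real.sqrt (deg i * deg j))
    (q : Fin n → ℝ) (hq : ∀ m, q m = ∑ j, W m j * A m j / deg m) :
    (Matrix.diagonal q + Matrix.hadamard W Atil).PosSemidef ∧
    ∀ lam : ℝ, 0 ≤ lam →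
      (Matrix.diagonal q + Matrix.hadamard W Atil
        + lam • (1 : Matrix (Fin n) (Fin n) ℝ)).PosSemidef := by
  have hA_nonneg : ∀ i j, 0 ≤ A i j := fun i j => by rcases hA01 i j with h | h <;> simp [h]
  have hWA_nonneg : ∀ i j, 0 ≤ (W ⊙ A) i j := fun i j => mul_nonneg (hWnn i j) (hA_nonneg i j)
  have hM : (diagonal q + W ⊙ Atil).PosSemidef := by
    rw [diagonal_add_hadamard_eq_conj_signlessLaplacian hdegpos hAtil hq]
    exact (posSemidef_signlessLaplacian (hWsymm.hadamard hAsymm) hWA_nonneg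
      ).conjTranspose_mul_mul_same _
  exact ⟨hM, fun lam hlam => hM.add (PosSemidef.one.smul hlam)⟩

/-- The matrix `diag(q) + W ⊙ Ã` is positive semidefinite, and consequently so
is `diag(q) + W ⊙ Ã + λI` for any `λ ≥ 0`. -/
theorem diag_add_hadamard_posSemidef (n : ℕ)
    (A W : Matrix (Fin n) (Fin n) ℝ)
    (hA01 : ∀ i j, A i j = 0 ∨ A i j = 1) (hAsymm : A.IsSymm)
    (deg : Fin n → ℝ) (hdeg : ∀ i, deg i = ∑ j, A i j) (hdegpos : ∀ i, 0 < deg i)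
    (hWsymm : W.IsSymm) (hWnn : ∀ i j, 0 ≤ W i j) (hWdiag : ∀ i, W i i = 0)
    (Atil : Matrix (Fin n) (Fin n) ℝ)
    (hAtil : ∀ i j, Atil i j = A i j / Real.sqrt (deg i * deg j))
    (q : Fin n → ℝ) (hq : ∀ m, q m = ∑ j, W m j * A m j / deg m) :
    (Matrix.diagonal q + Matrix.hadamard W Atil).PosSemidef ∧
    ∀ lam : ℝ, 0 ≤ lam →
      (Matrix.diagonal q + Matrix.hadamard W Atil
        + lam • (1 : Matrix (Fin n) (Fin n) ℝ)).PosSemidef :=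
  diag_add_hadamard_posSemidef_general n A W hA01 hAsymm deg hdegpos hWsymm hWnn Atil hAtil q hq
end

section
/- Let H := 2(diag(q) − W⊙Ã + λI) be the Hessian of the quadratic surrogate and Q̂ := 2(diag(q) + λI). Then 2Q̂ − H = 2(diag(q) + W⊙Ã + λI) is positive semidefinite; i.e., the diagonal approximation Q̂ satisfies H ⪯ 2Q̂. -/
/-!
Writing `D := diag(deg)^(-1/2)` and `C := W ⊙ A`, one has `diag(q) + W ⊙ Ã = D (diag(C 1) + C) D`.
The middle factor is the signless Laplacian of the symmetric nonnegative weights `C`, whose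
quadratic form is `½ ∑ᵢⱼ Cᵢⱼ (xᵢ + xⱼ)² ≥ 0`; congruence by `D` and adding `λI` keep
positive semidefiniteness.
-/

open Matrix

section SignlessLaplacian

variable {ι : Type*} [Fintype ι]

theorem sum_sum_mul_sq_add_mul_eq_half_sum_sum (C : Matrix ι ι ℝ) (hC : C.IsSymm) (x : ι → ℝ) :
    ∑ i, ∑ j, C i j * (x i ^ 2 + x i * x j) = (∑ i, ∑ j, C i j * (x i + x j) ^ 2) / 2 := by
  have hswap : ∑ i, ∑ j, C i j * (x i ^ 2 + x i * x j)
      = ∑ i, ∑ j, C i j * (x j ^ 2 + x j * x i) := by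
    rw [Finset.sum_comm]
    simp_rw [← hC.apply]
  rw [eq_div_iff two_ne_zero, mul_two]
  nth_rewrite 2 [hswap]
  simp_rw [← Finset.sum_add_distrib]
  congr! 2
  ring

variable [DecidableEq ι]

theorem dotProduct_diagonal_rowSum_add_mulVec (C : Matrix ι ι ℝ) (x : ι → ℝ) :
    x ⬝ᵥ ((diagonal (fun i => ∑ j, C i j) + C) *ᵥ x)
      = ∑ i, ∑ j, C i j * (x i ^ 2 + x i * x j) := by
  rw [add_mulVec, dotProduct_add]
  simp only [dotProduct, mulVec_diagonal]
  simp only [mulVec, dotProduct, Finset.sum_mul, Finset.mul_sum, ← Finset.sum_add_distrib]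
  congr! 2
  ring

theorem posSemidef_diagonal_rowSum_add (C : Matrix ι ι ℝ) (hC : C.IsSymm)
    (hC₀ : ∀ i j, 0 ≤ C i j) : (diagonal (fun i => ∑ j, C i j) + C).PosSemidef := by
  refine .of_dotProduct_mulVec_nonneg
    ((isHermitian_diagonal _).add (isHermitian_iff_isSymm.2 hC)) fun x => ?_
  rw [star_trivial, dotProduct_diagonal_rowSum_add_mulVec,
    sum_sum_mul_sq_add_mul_eq_half_sum_sum C hC]
  exact div_nonneg (Finset.sum_nonneg fun i _ => Finset.sum_nonneg fun j _ =>
    mul_nonneg (hC₀ i j) (sq_nonneg _)) zero_le_two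

theorem diagonal_add_hadamard_eq_diagonal_mul_mul_diagonal (A W Atil : Matrix ι ι ℝ)
    (deg q : ι → ℝ) (hdeg : ∀ i, 0 ≤ deg i)
    (hAtil : ∀ i j, Atil i j = A i j / √(deg i * deg j))
    (hq : ∀ m, q m = ∑ j, W m j * A m j / deg m) :
    diagonal q + W ⊙ Atil = diagonal (fun i => (√(deg i))⁻¹) *
      (diagonal (fun i => ∑ j, (W ⊙ A) i j) + W ⊙ A) * diagonal (fun i => (√(deg i))⁻¹) := by
  ext i j
  have hoff : (W ⊙ Atil) i j = (√(deg i))⁻¹ * (W ⊙ A) i j * (√(deg j))⁻¹ := by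
    rw [hadamard_apply, hadamard_apply, hAtil, Real.sqrt_mul (hdeg i)]
    ring
  rw [mul_diagonal, diagonal_mul, Matrix.add_apply, Matrix.add_apply, hoff, mul_add, add_mul]
  congr 1
  rcases eq_or_ne i j with rfl | hij
  · rw [diagonal_apply_eq, diagonal_apply_eq, hq, mul_right_comm, ← mul_inv,
      Real.mul_self_sqrt (hdeg i), ← Finset.sum_div, inv_mul_eq_div]
    rfl
  · simp [diagonal_apply_ne _ hij]

end SignlessLaplacian

theorem hessian_loewner_bound_general (n : ℕ)
    (A W : Matrix (Fin n) (Fin n) ℝ)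
    (hA01 : ∀ i j, A i j = 0 ∨ A i j = 1) (hAsymm : A.IsSymm)
    (deg : Fin n → ℝ) (hdegpos : ∀ i, 0 < deg i)
    (hWsymm : W.IsSymm) (hWnn : ∀ i j, 0 ≤ W i j)
    (Atil : Matrix (Fin n) (Fin n) ℝ)
    (hAtil : ∀ i j, Atil i j = A i j / Real.sqrt (deg i * deg j))
    (q : Fin n → ℝ) (hq : ∀ m, q m = ∑ j, W m j * A m j / deg m)
    (lam : ℝ) (hlam : 0 ≤ lam)
    (H Qhat : Matrix (Fin n) (Fin n) ℝ)
    (hH : H = (2:ℝ) • (Matrix.diagonal q - Matrix.hadamard W Atil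
      + lam • (1 : Matrix (Fin n) (Fin n) ℝ)))
    (hQ : Qhat = (2:ℝ) • (Matrix.diagonal q + lam • (1 : Matrix (Fin n) (Fin n) ℝ))) :
    (2:ℝ) • Qhat - H = (2:ℝ) • (Matrix.diagonal q + Matrix.hadamard W Atil
        + lam • (1 : Matrix (Fin n) (Fin n) ℝ)) ∧
    ((2:ℝ) • Qhat - H).PosSemidef := by
  have hdiff : (2:ℝ) • Qhat - H = (2:ℝ) • (diagonal q + W ⊙ Atil + lam • 1) := by
    subst hH hQ
    module
  refine ⟨hdiff, ?_⟩
  have hA₀ : ∀ i j, 0 ≤ A i j := fun i j => by rcases hA01 i j with h | h <;> simp [h]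
  have hsignless := posSemidef_diagonal_rowSum_add (W ⊙ A)
    (by rw [IsSymm, transpose_hadamard, hWsymm, hAsymm]) fun i j => mul_nonneg (hWnn i j) (hA₀ i j)
  rw [hdiff, diagonal_add_hadamard_eq_diagonal_mul_mul_diagonal A W Atil deg q
    (fun i => (hdegpos i).le) hAtil hq]
  refine (PosSemidef.add ?_ (PosSemidef.one.smul hlam)).smul zero_le_two
  simpa [diagonal_conjTranspose] using
    hsignless.conjTranspose_mul_mul_same (diagonal fun i => (√(deg i))⁻¹)

/-- With `H := 2(diag(q) − W⊙Ã + λI)` the Hessian of the quadratic surrogate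
and `Q̂ := 2(diag(q) + λI)`, we have `2Q̂ − H = 2(diag(q) + W⊙Ã + λI)`, which is
positive semidefinite; i.e. `H ⪯ 2Q̂` in the Loewner order. -/
theorem hessian_loewner_bound (n : ℕ)
    (A W : Matrix (Fin n) (Fin n) ℝ)
    (hA01 : ∀ i j, A i j = 0 ∨ A i j = 1) (hAsymm : A.IsSymm)
    (deg : Fin n → ℝ) (hdeg : ∀ i, deg i = ∑ j, A i j) (hdegpos : ∀ i, 0 < deg i)
    (hWsymm : W.IsSymm) (hWnn : ∀ i j, 0 ≤ W i j) (hWdiag : ∀ i, W i i = 0)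
    (Atil : Matrix (Fin n) (Fin n) ℝ)
    (hAtil : ∀ i j, Atil i j = A i j / Real.sqrt (deg i * deg j))
    (q : Fin n → ℝ) (hq : ∀ m, q m = ∑ j, W m j * A m j / deg m)
    (lam : ℝ) (hlam : 0 ≤ lam)
    (H Qhat : Matrix (Fin n) (Fin n) ℝ)
    (hH : H = (2:ℝ) • (Matrix.diagonal q - Matrix.hadamard W Atil
      + lam • (1 : Matrix (Fin n) (Fin n) ℝ)))
    (hQ : Qhat = (2:ℝ) • (Matrix.diagonal q + lam • (1 : Matrix (Fin n) (Fin n) ℝ))) :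
    (2:ℝ) • Qhat - H = (2:ℝ) • (Matrix.diagonal q + Matrix.hadamard W Atil
        + lam • (1 : Matrix (Fin n) (Fin n) ℝ)) ∧
    ((2:ℝ) • Qhat - H).PosSemidef :=
  hessian_loewner_bound_general n A W hA01 hAsymm deg hdegpos hWsymm hWnn Atil hAtil q hq lam hlam H
    Qhat hH hQ
end

section
/- The APPNP fixed-point recovery: if each layer performs F^{(k+1)} = (1/(1+λ)) Ã F^{(k)} + (λ/(1+λ)) F^{(0)} with ‖Ã‖₂ ≤ 1 and λ > 0, then the iterates converge to the unique fixed point F* = λ((1+λ)I − Ã)⁻¹ F^{(0)}, which is the unique minimizer of the objective Σ_{(i,j)∈E} ‖f_i/√d_i − f_j/√d_j‖² + λ Σ_i ‖f_i − f_i^{(0)}‖², provided Ã is the symmetrically normalized adjacency of a graph with positive degrees. -/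
/-!
Write `M = (1 + λ)I − Ã`. Since `‖Ã‖₂ ≤ 1 < 1 + λ`, the symmetric matrix `M` is positive definite,
hence invertible, and `G` is fixed by one APPNP layer iff `M G = λ F⁽⁰⁾`, i.e. iff `G = F*`.
The layer is `G ↦ P G + b` with `‖P‖₂ = ‖Ã‖₂ / (1 + λ) < 1`, so `F k = F* + Pᵏ (F 0 − F*) → F*`.
Finally `M = (I − Ã) + λI` is the Hessian of the smoothing objective `J` and `M F* = λ F⁽⁰⁾` is
its stationarity condition, so `J G = J F* + tr((G − F*)ᵀ M (G − F*))`, and `M ≻ 0` makes `F*` the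
strict minimiser.
-/

open Matrix Filter Topology

namespace Matrix

variable {ι κ : Type*} [Fintype ι]

lemma dotProduct_mulVec_le_norm_toEuclideanCLM_mul [DecidableEq ι] (A : Matrix ι ι ℝ)
    (x : ι → ℝ) : x ⬝ᵥ A *ᵥ x ≤ ‖toEuclideanCLM (𝕜 := ℝ) A‖ * (x ⬝ᵥ x) := by
  set v : EuclideanSpace ℝ ι := WithLp.toLp 2 x
  have hv : ‖v‖ ^ 2 = x ⬝ᵥ x := by
    rw [← real_inner_self_eq_norm_sq, EuclideanSpace.inner_toLp_toLp, dotProduct_comm]; rfl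
  calc x ⬝ᵥ A *ᵥ x = inner ℝ v (toEuclideanCLM (𝕜 := ℝ) A v) := (inner_toEuclideanCLM A v v).symm
    _ ≤ ‖v‖ * ‖toEuclideanCLM (𝕜 := ℝ) A v‖ := real_inner_le_norm _ _
    _ ≤ ‖v‖ * (‖toEuclideanCLM (𝕜 := ℝ) A‖ * ‖v‖) := by
      gcongr; exact ContinuousLinearMap.le_opNorm _ _
    _ = ‖toEuclideanCLM (𝕜 := ℝ) A‖ * (x ⬝ᵥ x) := by rw [← hv]; ring

lemma posDef_smul_one_sub_of_norm_toEuclideanCLM_lt [DecidableEq ι] {A : Matrix ι ι ℝ}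
    (hA : A.IsSymm) {c : ℝ} (hc : ‖toEuclideanCLM (𝕜 := ℝ) A‖ < c) : (c • 1 - A).PosDef := by
  refine .of_dotProduct_mulVec_pos ?_ fun x hx ↦ ?_
  · simpa [IsSymm, transpose_sub] using hA.eq
  · have hxx : 0 < x ⬝ᵥ x := by simpa using dotProduct_star_self_pos_iff.mpr hx
    have := dotProduct_mulVec_le_norm_toEuclideanCLM_mul A x
    simp only [star_trivial, sub_mulVec, smul_mulVec, one_mulVec, dotProduct_sub, dotProduct_smul,
      smul_eq_mul]
    nlinarith

lemma tendsto_pow_atTop_nhds_zero_of_norm_toEuclideanCLM_lt_one [DecidableEq ι]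
    {P : Matrix ι ι ℝ} (hP : ‖toEuclideanCLM (𝕜 := ℝ) P‖ < 1) :
    Tendsto (P ^ ·) atTop (𝓝 0) := by
  let e := (toEuclideanCLM (n := ι) (𝕜 := ℝ)).symm.toAlgEquiv.toLinearEquiv.toContinuousLinearEquiv
  have := (e.continuous.tendsto 0).comp (tendsto_pow_atTop_nhds_zero_of_norm_lt_one hP)
  simpa [Function.comp_def, e, ← map_pow] using this

lemma tendsto_of_mul_add_recurrence [DecidableEq ι] {R : Type*} [Ring R] [TopologicalSpace R]
    [IsTopologicalRing R] {P : Matrix ι ι R} (hP : Tendsto (fun k : ℕ ↦ P ^ k) atTop (𝓝 0))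
    {b s : Matrix ι κ R} (hs : P * s + b = s) {x : ℕ → Matrix ι κ R}
    (hx : ∀ k, x (k + 1) = P * x k + b) : Tendsto x atTop (𝓝 s) := by
  have hform : ∀ k, x k = s + P ^ k * (x 0 - s) := by
    intro k
    induction k with
    | zero => simp
    | succ k ih =>
      rw [hx, ih, pow_succ', Matrix.mul_assoc, Matrix.mul_add]
      nth_rw 3 [← hs]
      abel
  have hcont : Continuous fun Q : Matrix ι ι R ↦ s + Q * (x 0 - s) :=
    continuous_const.add (continuous_id.matrix_mul continuous_const)
  refine Tendsto.congr (fun k ↦ (hform k).symm) ?_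
  simpa [Function.comp_def] using (hcont.tendsto 0).comp hP

variable [Fintype κ]

lemma trace_transpose_mul_mul_eq_sum {R : Type*} [CommRing R] (M : Matrix ι ι R)
    (H : Matrix ι κ R) : trace (Hᵀ * M * H) = ∑ j, Hᵀ j ⬝ᵥ M *ᵥ Hᵀ j := by
  rw [Matrix.mul_assoc]
  simp only [trace, diag, mul_apply, mulVec, dotProduct, transpose_apply]

lemma PosDef.trace_transpose_mul_mul_pos {M : Matrix ι ι ℝ} (hM : M.PosDef)
    {H : Matrix ι κ ℝ} (hH : H ≠ 0) : 0 < trace (Hᵀ * M * H) := by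
  obtain ⟨j, hj⟩ : ∃ j, Hᵀ j ≠ 0 := by
    by_contra! h
    exact hH (transpose_eq_zero.mp (funext h))
  rw [trace_transpose_mul_mul_eq_sum]
  exact Finset.sum_pos' (fun i _ ↦ by simpa using hM.posSemidef.dotProduct_mulVec_nonneg (Hᵀ i))
    ⟨j, Finset.mem_univ j, by simpa using hM.dotProduct_mulVec_pos hj⟩

def appnpStep {K : Type*} [Field K] (A : Matrix ι ι K) (lam : K) (F0 G : Matrix ι κ K) :
    Matrix ι κ K :=
  (1 / (1 + lam)) • (A * G) + (lam / (1 + lam)) • F0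

lemma appnpStep_eq_self_iff {K : Type*} [Field K] [DecidableEq ι] {A : Matrix ι ι K} {lam : K}
    (hlam : 1 + lam ≠ 0) {F0 G : Matrix ι κ K} :
    appnpStep A lam F0 G = G ↔ ((1 + lam) • 1 - A) * G = lam • F0 := by
  have hdiff :
      appnpStep A lam F0 G - G = (1 + lam)⁻¹ • (lam • F0 - ((1 + lam) • 1 - A) * G) := by
    rw [appnpStep, Matrix.sub_mul, Matrix.smul_mul, Matrix.one_mul]
    match_scalars <;> field_simp
  rw [← sub_eq_zero, hdiff, smul_eq_zero_iff_right (inv_ne_zero hlam), sub_eq_zero, eq_comm]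

section Objective

variable {R : Type*} [CommRing R] [DecidableEq ι]

/-- With `Q = I − Ã` this is the paper's objective: `tr(Gᵀ(I − Ã)G)` is the normalized-Laplacian
smoothness term and the second trace is `‖G − F⁽⁰⁾‖²_F`. -/
def graphSmoothingObjective (Q : Matrix ι ι R) (lam : R) (F0 G : Matrix ι κ R) : R :=
  trace (Gᵀ * Q * G) + lam * trace ((G - F0)ᵀ * (G - F0))

lemma graphSmoothingObjective_eq_add {Q : Matrix ι ι R} (hQ : Qᵀ = Q) {lam : R}
    {F0 S : Matrix ι κ R} (hS : (Q + lam • 1) * S = lam • F0) (G : Matrix ι κ R) :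
    graphSmoothingObjective Q lam F0 G
      = graphSmoothingObjective Q lam F0 S + trace ((G - S)ᵀ * (Q + lam • 1) * (G - S)) := by
  obtain ⟨H, rfl⟩ : ∃ H, G = S + H := ⟨G - S, by abel⟩
  have hQS : trace (Sᵀ * Q * H) = trace (Hᵀ * Q * S) := by
    rw [← trace_transpose]; simp [transpose_mul, hQ, Matrix.mul_assoc]
  have hF0 : trace (F0ᵀ * H) = trace (Hᵀ * F0) := by
    rw [← trace_transpose]; simp [transpose_mul]
  have hSH : trace (Sᵀ * H) = trace (Hᵀ * S) := by
    rw [← trace_transpose]; simp [transpose_mul]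
  have hstat : trace (Hᵀ * Q * S) + lam * trace (Hᵀ * S) = lam * trace (Hᵀ * F0) := by
    simpa [Matrix.mul_add, Matrix.add_mul, Matrix.mul_assoc, trace_add, trace_smul]
      using congrArg (fun X ↦ trace (Hᵀ * X)) hS
  simp only [graphSmoothingObjective, add_sub_cancel_left, transpose_add, transpose_sub,
    Matrix.add_mul, Matrix.mul_add, Matrix.sub_mul, Matrix.mul_sub, trace_add, trace_sub,
    Matrix.mul_smul, Matrix.smul_mul, trace_smul, Matrix.mul_one, smul_eq_mul]
  linear_combination hQS + lam * hSH - lam * hF0 + 2 * hstat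

lemma graphSmoothingObjective_lt {Q : Matrix ι ι ℝ} (hQ : Qᵀ = Q) {lam : ℝ}
    (hM : (Q + lam • 1).PosDef) {F0 S : Matrix ι κ ℝ} (hS : (Q + lam • 1) * S = lam • F0)
    {G : Matrix ι κ ℝ} (hG : G ≠ S) :
    graphSmoothingObjective Q lam F0 S < graphSmoothingObjective Q lam F0 G := by
  rw [graphSmoothingObjective_eq_add hQ hS G, lt_add_iff_pos_right]
  exact hM.trace_transpose_mul_mul_pos (sub_ne_zero.mpr hG)

end Objective

end Matrix

/-- APPNP fixed-point recovery: with `‖Ã‖₂ ≤ 1` (ℓ2 operator norm, expressed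
via `toEuclideanCLM`), symmetric `Ã`, and `λ > 0`, the iteration
`F^{(k+1)} = (1/(1+λ))ÃF^{(k)} + (λ/(1+λ))F^{(0)}` converges to the unique
fixed point `F* = λ((1+λ)I − Ã)⁻¹F^{(0)}`, which is the unique minimizer of the
ℓ2 graph smoothing objective `tr(Fᵀ(I − Ã)F) + λ‖F − F^{(0)}‖²`. -/
theorem appnp_fixed_point (n d : ℕ)
    (Atil : Matrix (Fin n) (Fin n) ℝ) (hsymm : Atil.IsSymm)
    (hnorm : ‖Matrix.toEuclideanCLM (𝕜 := ℝ) Atil‖ ≤ 1)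
    (lam : ℝ) (hlam : 0 < lam)
    (F0 : Matrix (Fin n) (Fin d) ℝ)
    (F : ℕ → Matrix (Fin n) (Fin d) ℝ)
    (hrec : ∀ k, F (k+1) = (1/(1+lam)) • (Atil * F k) + (lam/(1+lam)) • F0)
    (Fstar : Matrix (Fin n) (Fin d) ℝ)
    (hFstar : Fstar
      = lam • ((1+lam) • (1 : Matrix (Fin n) (Fin n) ℝ) - Atil)⁻¹ * F0) :
    Filter.Tendsto F Filter.atTop (nhds Fstar) ∧
    (∀ G : Matrix (Fin n) (Fin d) ℝ,
      (1/(1+lam)) • (Atil * G) + (lam/(1+lam)) • F0 = G ↔ G = Fstar) ∧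
    (∀ G : Matrix (Fin n) (Fin d) ℝ, G ≠ Fstar →
      Matrix.trace (Fstarᵀ * ((1 : Matrix (Fin n) (Fin n) ℝ) - Atil) * Fstar)
          + lam * Matrix.trace ((Fstar - F0)ᵀ * (Fstar - F0))
        < Matrix.trace (Gᵀ * ((1 : Matrix (Fin n) (Fin n) ℝ) - Atil) * G)
          + lam * Matrix.trace ((G - F0)ᵀ * (G - F0))) := by
  set M := (1 + lam) • (1 : Matrix (Fin n) (Fin n) ℝ) - Atil
  have hM : M.PosDef := posDef_smul_one_sub_of_norm_toEuclideanCLM_lt hsymm (by linarith)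
  let := hM.isUnit.invertible
  have hMFstar : M * Fstar = lam • F0 := by
    rw [hFstar, Matrix.smul_mul, Matrix.mul_smul, mul_inv_cancel_left_of_invertible]
  have hfixed (G : Matrix (Fin n) (Fin d) ℝ) : appnpStep Atil lam F0 G = G ↔ G = Fstar := by
    rw [appnpStep_eq_self_iff (by linarith), ← hMFstar, Matrix.mul_right_inj_of_invertible]
  refine ⟨?_, hfixed, fun G hG ↦ ?_⟩
  · have hP : ‖toEuclideanCLM (𝕜 := ℝ) ((1 / (1 + lam)) • Atil)‖ < 1 := by
      rw [map_smul, norm_smul, Real.norm_of_nonneg (by positivity), one_div_mul_eq_div,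
        div_lt_one (by linarith)]
      linarith
    refine tendsto_of_mul_add_recurrence
      (tendsto_pow_atTop_nhds_zero_of_norm_toEuclideanCLM_lt_one hP) ?_
      fun k ↦ by rw [hrec, Matrix.smul_mul]
    simpa [appnpStep, Matrix.smul_mul] using (hfixed Fstar).mpr rfl
  · have hQM : (1 - Atil) + lam • 1 = M := by module
    exact graphSmoothingObjective_lt (by simp [hsymm.eq]) (hQM ▸ hM) (hQM ▸ hMFstar) hG
end
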